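/- arXiv:0901.1678 — 5 statements merged into one kernel-verified Lean document; each statement's English description precedes it below -/
import Mathlib

section
/- Let H be an m-hypergraph and S an independent set of vertices. Define A_S = (a_1,...,a_n) by a_i = 0 if x_i ∈ S, a_i = 2 if x_i ∈ N(S), and a_i = 1 otherwise. Then A_S is a 2-cover of H. -/
open MvPolynomial Finset

noncomputable section

/-- A `k`-cover of a hypergraph with edge set `E`: a nonzero tuple whose entries
sum to at least `k` over every edge. -/
def IsCover {V : Type*} (E : Finset (Finset V)) (k : ℕ) (a : V → ℕ) : Prop :=
  a ≠ 0 ∧ ∀ e ∈ E, k ≤ ∑ i ∈ e, a i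

/-- `a` is a sum of two 1-covers. -/
def SumTwoOneCovers {V : Type*} (E : Finset (Finset V)) (a : V → ℕ) : Prop :=
  ∃ b c : V → ℕ, IsCover E 1 b ∧ IsCover E 1 c ∧ a = b + c

/-- An independent set: no edge is contained in `S`. -/
def IsIndep {V : Type*} (E : Finset (Finset V)) (S : Finset V) : Prop :=
  ∀ e ∈ E, ¬ e ⊆ S

/-- `i` is in the neighborhood of `S`: `i ∉ S` and some edge consists of `i`
together with vertices of `S`. -/
def InNbhd {V : Type*} (E : Finset (Finset V)) (S : Finset V) (i : V) : Prop :=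
  i ∉ S ∧ ∃ e ∈ E, i ∈ e ∧ ∀ j ∈ e, j ≠ i → j ∈ S

open Classical in
/-- The 2-cover `A_S` attached to an independent set `S`:
`0` on `S`, `2` on `N(S)`, and `1` elsewhere. -/
noncomputable def indepCover {V : Type*} (E : Finset (Finset V)) (S : Finset V) : V → ℕ :=
  fun i => if i ∈ S then 0 else if InNbhd E S i then 2 else 1

/-- The Alexander dual of the edge ideal: `⋂_{edges e} (x_i : i ∈ e)`. -/
noncomputable def dualIdeal {V : Type*} (K : Type*) [Field K] (E : Finset (Finset V)) :
    Ideal (MvPolynomial V K) :=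
  ⨅ e ∈ E, Ideal.span (X '' (e : Set V))

/-- The monomial `x_1^{a_1} ⋯ x_n^{a_n}` attached to a tuple `a`. -/
noncomputable def coverMonomial {V : Type*} [Fintype V] (K : Type*) [Field K] (a : V → ℕ) :
    MvPolynomial V K :=
  ∏ i, X i ^ a i

/-- Connectedness of a hypergraph: any two vertices are linked by a chain of
vertices in which consecutive vertices share an edge. -/
def HConnected {V : Type*} (E : Finset (Finset V)) : Prop :=
  ∀ x y : V, ∃ l : List V, l.head? = some x ∧ l.getLast? = some y ∧
    l.Chain' fun a b => ∃ e ∈ E, a ∈ e ∧ b ∈ e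

/-- The cyclic 3-hypergraph with edges `{x_1,x_2,x_3}, {x_3,x_4,x_5}, …`
(0-based: `{2j, 2j+1, 2j+2}` modulo `n`). -/
def cyc3 (n : ℕ) (hn : 0 < n) : Finset (Finset (Fin n)) :=
  (Finset.range ((n + 1) / 2)).image fun j =>
    ({⟨(2 * j) % n, Nat.mod_lt _ hn⟩, ⟨(2 * j + 1) % n, Nat.mod_lt _ hn⟩,
      ⟨(2 * j + 2) % n, Nat.mod_lt _ hn⟩} : Finset (Fin n))

/-- The alternating tuple: `1` on odd vertices `x_1, x_3, …` (0-based even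
indices), `0` on even vertices. -/
def altCover (n : ℕ) : Fin n → ℕ :=
  fun i => if (i : ℕ) % 2 = 0 then 1 else 0

section IndepCover

variable {V : Type*} {E : Finset (Finset V)} {S : Finset V} {i : V}

theorem indepCover_of_inNbhd (h : InNbhd E S i) : indepCover E S i = 2 := by
  simp [indepCover, h.1, h]

theorem one_le_indepCover (hi : i ∉ S) : 1 ≤ indepCover E S i := by
  unfold indepCover
  split_ifs <;> omega

/-- An edge leaving `S` either meets `V \ S` in a single vertex, which then lies in `N(S)` and
carries weight `2`, or in two vertices of weight at least `1` each. -/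
theorem two_le_sum_indepCover {e : Finset V} (he : e ∈ E) (heS : ¬e ⊆ S) :
    2 ≤ ∑ j ∈ e, indepCover E S j := by
  obtain ⟨i, hie, hiS⟩ := Finset.not_subset.mp heS
  by_cases hrest : ∀ j ∈ e, j ≠ i → j ∈ S
  · calc 2 = indepCover E S i := (indepCover_of_inNbhd ⟨hiS, e, he, hie, hrest⟩).symm
      _ ≤ ∑ j ∈ e, indepCover E S j := Finset.single_le_sum (fun _ _ => Nat.zero_le _) hie
  · obtain ⟨j, hje, hji, hjS⟩ : ∃ j ∈ e, j ≠ i ∧ j ∉ S := by simpa using hrest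
    calc 2 ≤ indepCover E S i + indepCover E S j :=
          add_le_add (one_le_indepCover hiS) (one_le_indepCover hjS)
      _ ≤ ∑ k ∈ e, indepCover E S k :=
          Finset.add_le_sum (fun _ _ => Nat.zero_le _) hie hje (Ne.symm hji)

end IndepCover

theorem isCover_of_forall_le_sum {V : Type*} {E : Finset (Finset V)} {k : ℕ} {a : V → ℕ}
    (hE : E.Nonempty) (hk : 0 < k) (h : ∀ e ∈ E, k ≤ ∑ i ∈ e, a i) : IsCover E k a := by
  refine ⟨fun ha => ?_, h⟩
  obtain ⟨e, he⟩ := hE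
  simpa [ha] using (h e he).trans_lt' hk

theorem stmt1_general {n : ℕ} (E : Finset (Finset (Fin n))) (hE : E.Nonempty)
    (S : Finset (Fin n)) (hS : IsIndep E S) :
    IsCover E 2 (indepCover E S) :=
  isCover_of_forall_le_sum hE two_pos fun e he => two_le_sum_indepCover he (hS e he)

theorem stmt1 {n m : ℕ} (E : Finset (Finset (Fin n))) (hE : E.Nonempty)
    (hm : ∀ e ∈ E, e.card = m) (S : Finset (Fin n)) (hS : IsIndep E S) :
    IsCover E 2 (indepCover E S) :=
  stmt1_general E hE S hS
end
end

section
/- Let H be an m-hypergraph and W a 2-cover of H such that W ≠ A_S for all independent sets S. Then there exists an independent set S and a 0-cover Y (a nonzero element of ℕ^n) such that W = A_S + Y. -/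
/-!
Take for `S` the set of vertices where `W` vanishes. An edge inside `S` would have `W`-weight
`0 < 2`, so `S` is independent. Moreover `A_S ≤ W` pointwise: off `S` this is `1 ≤ W i`, and for
`i ∈ N(S)` the witnessing edge has all vertices other than `i` in `S`, so its whole weight `≥ 2`
sits on `i`. Hence `Y = W - A_S` works, and it is nonzero because `W ≠ A_S`.
-/

open MvPolynomial Finset

noncomputable section

section

variable {V : Type*} [Fintype V] {E : Finset (Finset V)} {W : V → ℕ}

def zeroSet (W : V → ℕ) : Finset V := {i | W i = 0}

@[simp]
lemma mem_zeroSet {i : V} : i ∈ zeroSet W ↔ W i = 0 := by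
  simp [zeroSet]

lemma isIndep_zeroSet (hW : ∀ e ∈ E, 1 ≤ ∑ i ∈ e, W i) : IsIndep E (zeroSet W) := by
  intro e he hsub
  have hzero : ∑ i ∈ e, W i = 0 := sum_eq_zero fun i hi => mem_zeroSet.1 (hsub hi)
  have := hW e he
  omega

lemma indepCover_zeroSet_le (hW : ∀ e ∈ E, 2 ≤ ∑ i ∈ e, W i) :
    indepCover E (zeroSet W) ≤ W := by
  intro i
  unfold indepCover
  split_ifs with hS hN
  · exact Nat.zero_le _
  · obtain ⟨-, e, he, hie, hrest⟩ := hN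
    have hsum : ∑ j ∈ e, W j = W i :=
      sum_eq_single_of_mem i hie fun j hj hji => mem_zeroSet.1 (hrest j hj hji)
    simpa [hsum] using hW e he
  · exact Nat.one_le_iff_ne_zero.2 fun h => hS (mem_zeroSet.2 h)

end

theorem stmt2_general {n : ℕ} (E : Finset (Finset (Fin n)))
    (W : Fin n → ℕ) (hW : IsCover E 2 W)
    (hne : ∀ S : Finset (Fin n), IsIndep E S → W ≠ indepCover E S) :
    ∃ S : Finset (Fin n), IsIndep E S ∧
      ∃ Y : Fin n → ℕ, Y ≠ 0 ∧ W = indepCover E S + Y := by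
  have hindep : IsIndep E (zeroSet W) :=
    isIndep_zeroSet fun e he => le_trans (by norm_num) (hW.2 e he)
  have hle := indepCover_zeroSet_le hW.2
  refine ⟨zeroSet W, hindep, W - indepCover E (zeroSet W), ?_, (add_tsub_cancel_of_le hle).symm⟩
  intro hY
  exact hne _ hindep (le_antisymm (tsub_eq_zero_iff_le.1 hY) hle)

theorem stmt2 {n m : ℕ} (E : Finset (Finset (Fin n))) (hm : ∀ e ∈ E, e.card = m)
    (W : Fin n → ℕ) (hW : IsCover E 2 W)
    (hne : ∀ S : Finset (Fin n), IsIndep E S → W ≠ indepCover E S) :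
    ∃ S : Finset (Fin n), IsIndep E S ∧
      ∃ Y : Fin n → ℕ, Y ≠ 0 ∧ W = indepCover E S + Y :=
  stmt2_general E W hW hne
end
end

section
/- Let G be a bipartite simple graph and S any independent set of G. Then the 2-cover A_S (with entry 0 on S, 2 on N(S), 1 elsewhere) is the sum of two 1-covers of G. -/
open MvPolynomial Finset

noncomputable section

theorem stmt7 {n : ℕ} (E : Finset (Finset (Fin n))) (hE : E.Nonempty)
    (hm : ∀ e ∈ E, e.card = 2)
    (A B : Finset (Fin n)) (hd : Disjoint A B) (hu : A ∪ B = Finset.univ)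
    (hbip : ∀ e ∈ E, (e ∩ A).Nonempty ∧ (e ∩ B).Nonempty)
    (S : Finset (Fin n)) (hS : IsIndep E S) :
    SumTwoOneCovers E (indepCover E S) := by
  classical
  set b : Fin n → ℕ :=
    fun i => if i ∈ S then 0 else if InNbhd E S i then 1 else if i ∈ A then 1 else 0 with hb
  set c : Fin n → ℕ :=
    fun i => if i ∈ S then 0 else if InNbhd E S i then 1 else if i ∈ B then 1 else 0 with hc
  have key : ∀ e ∈ E, (1 ≤ ∑ i ∈ e, b i) ∧ (1 ≤ ∑ i ∈ e, c i) := by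
    intro e he
    obtain ⟨u, hu'⟩ := (hbip e he).1
    obtain ⟨v, hv'⟩ := (hbip e he).2
    simp only [mem_inter] at hu' hv'
    have huv : u ≠ v := fun h => (Finset.disjoint_left.mp hd hu'.2) (h ▸ hv'.2)
    have he2 : e = {u, v} := by
      refine (Finset.eq_of_subset_of_card_le ?_ ?_).symm
      · intro x hx
        simp only [mem_insert, mem_singleton] at hx
        rcases hx with h | h <;> subst h
        · exact hu'.1
        · exact hv'.1
      · rw [hm e he, Finset.card_insert_of_notMem (by simpa using huv),
          Finset.card_singleton]
    subst he2
    rw [Finset.sum_pair huv, Finset.sum_pair huv]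
    have hnotsub : ¬ ({u, v} : Finset (Fin n)) ⊆ S := hS _ he
    constructor
    · by_cases hus : u ∈ S
      · have hvs : v ∉ S := by
          intro hvs
          refine hnotsub fun x hx => ?_
          simp only [mem_insert, mem_singleton] at hx
          rcases hx with h | h <;> subst h <;> assumption
        have hvn : InNbhd E S v := by
          refine ⟨hvs, {u, v}, he, by simp, ?_⟩
          intro j hj hjv
          simp only [mem_insert, mem_singleton] at hj
          rcases hj with h | h
          · subst h; exact hus
          · exact absurd h hjv
        simp [hb, hvs, hvn]
      · by_cases hun : InNbhd E S u
        · simp [hb, hus, hun]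
        · simp [hb, hus, hun, hu'.2]
    · by_cases hvs : v ∈ S
      · have hus : u ∉ S := by
          intro hus
          refine hnotsub fun x hx => ?_
          simp only [mem_insert, mem_singleton] at hx
          rcases hx with h | h <;> subst h <;> assumption
        have hun : InNbhd E S u := by
          refine ⟨hus, {u, v}, he, by simp, ?_⟩
          intro j hj hju
          simp only [mem_insert, mem_singleton] at hj
          rcases hj with h | h
          · exact absurd h hju
          · subst h; exact hvs
        simp [hc, hus, hun]
      · by_cases hvn : InNbhd E S v
        · simp [hc, hvs, hvn]
        · simp [hc, hvs, hvn, hv'.2]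
  obtain ⟨e0, he0⟩ := hE
  have hbne : b ≠ 0 := by
    intro h
    have := (key e0 he0).1
    rw [h] at this
    simp at this
  have hcne : c ≠ 0 := by
    intro h
    have := (key e0 he0).2
    rw [h] at this
    simp at this
  refine ⟨b, c, ⟨hbne, fun e he => (key e he).1⟩, ⟨hcne, fun e he => (key e he).2⟩, ?_⟩
  funext i
  have hiAB : i ∈ A ∨ i ∈ B := by
    have : i ∈ A ∪ B := hu ▸ Finset.mem_univ i
    simpa using this
  have hnot : ¬ (i ∈ A ∧ i ∈ B) := fun ⟨h1, h2⟩ => Finset.disjoint_left.mp hd h1 h2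
  simp only [indepCover, Pi.add_apply, hb, hc]
  by_cases hiS : i ∈ S
  · simp [hiS]
  · by_cases hiN : InNbhd E S i
    · simp [hiS, hiN]
    · rcases hiAB with h | h
      · have hB : i ∉ B := fun hB => hnot ⟨h, hB⟩
        simp [hiS, hiN, h, hB]
      · have hA : i ∉ A := fun hA => hnot ⟨hA, h⟩
        simp [hiS, hiN, h, hA]
end
end

section
/- Let G be a simple graph with edge ideal I. Then (I^∨)^2 has no non-minimal associated primes if and only if G is bipartite. -/
open MvPolynomial Finset

noncomputable section

/-!
`J = I^∨` is the monomial ideal spanned by the exponents whose support is a vertex cover, so `J²`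
is spanned by sums of two covers. The power `(x_i : i ∈ S)^k` consists of the polynomials all of
whose monomials have `S`-degree at least `k`; it is primary because the lowest `S`-degree (a
weighted order) is additive on products.

If `G` is bipartite, an exponent of degree at least `2` on every edge splits into two covers, so
`J² = ⋂ₑ (x_i : i ∈ e)²` is a primary decomposition whose radicals are the minimal primes.
If not, let `C` be minimal among the vertex sets inducing a non-bipartite subgraph and
`m = ∏_{i ∈ C} x_i ∏_{i ∉ C} x_i²`. A bipartition of `C ∖ {i}` splits `x_i m` into two covers,
while a monomial `r m ∈ J²` with `r` free of the variables of `C` would two-colour `C`. Hence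
`J² : m = (x_i : i ∈ C)`, an associated prime that is not minimal because `C` is not an edge.
-/

namespace Finsupp

variable {σ : Type*}

theorem isUpperSet_le_weight (w : σ → ℕ) (k : ℕ) :
    IsUpperSet {d : σ →₀ ℕ | k ≤ weight w d} := by
  intro a b hab ha
  obtain ⟨c, rfl⟩ := le_iff_exists_add.1 hab
  exact (show k ≤ _ from ha).trans (by simp)

variable {S : Set σ}

theorem one_le_weight_indicator_iff {d : σ →₀ ℕ} :
    1 ≤ weight (S.indicator 1) d ↔ ∃ i ∈ S, d i ≠ 0 := by
  constructor
  · intro hd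
    by_contra! h
    refine (Nat.one_le_iff_ne_zero.1 hd) (Finset.sum_eq_zero fun i _ => ?_)
    by_cases hi : i ∈ S <;> simp [hi, h]
  · rintro ⟨i, hiS, hi⟩
    calc 1 ≤ d i := Nat.one_le_iff_ne_zero.2 hi
      _ ≤ weight (S.indicator 1) d := le_weight _ (by simp [hiS]) d

open scoped Pointwise in
theorem le_weight_indicator_add_one_le (k : ℕ) :
    {d : σ →₀ ℕ | k ≤ weight (S.indicator 1) d} + {d | 1 ≤ weight (S.indicator 1) d} =
      {d | k + 1 ≤ weight (S.indicator 1) d} := by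
  ext d
  constructor
  · rintro ⟨a, ha, b, hb, rfl⟩
    simp only [Set.mem_ofPred_eq, map_add] at ha hb ⊢
    omega
  · intro hd
    change k + 1 ≤ _ at hd
    obtain ⟨i, hiS, hi⟩ := one_le_weight_indicator_iff.1 (le_of_add_le_right hd)
    have hsplit := weight_sub_single_add (w := S.indicator (1 : σ → ℕ)) hi
    simp only [Set.indicator_of_mem hiS, Pi.one_apply] at hsplit
    refine ⟨d - single i 1, show k ≤ _ by omega, single i 1, by simp [weight_single, hiS], ?_⟩
    exact tsub_add_cancel_of_le (single_le_iff.2 (Nat.one_le_iff_ne_zero.2 hi))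

theorem weight_indicator_eq_sum (S : Finset σ) (d : σ →₀ ℕ) :
    weight ((S : Set σ).indicator 1) d = ∑ i ∈ S, d i := by
  classical
  rw [weight_apply, sum_of_support_subset d (Finset.subset_union_left (s₂ := S)) _ (by simp)]
  simp [Set.indicator_apply, Finset.sum_ite_mem, Finset.union_inter_cancel_right]

end Finsupp

namespace MvPolynomial

variable {σ R : Type*} [CommRing R]

theorem mem_ideal_span_monomial_image_of_isUpperSet {s : Set (σ →₀ ℕ)} (hs : IsUpperSet s)
    {f : MvPolynomial σ R} :
    f ∈ Ideal.span ((monomial · (1 : R)) '' s) ↔ ∀ d ∈ f.support, d ∈ s := by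
  rw [mem_ideal_span_monomial_image]
  exact forall₂_congr fun d _ => ⟨fun ⟨t, ht, htd⟩ => hs htd ht, fun hd => ⟨d, hd, le_rfl⟩⟩

open scoped Pointwise in
theorem span_monomial_image_mul (s t : Set (σ →₀ ℕ)) :
    Ideal.span ((monomial · (1 : R)) '' s) * Ideal.span ((monomial · (1 : R)) '' t) =
      Ideal.span ((monomial · (1 : R)) '' (s + t)) := by
  rw [Ideal.span_mul_span', ← Set.image2_mul, ← Set.image2_add, Set.image_image2,
    Set.image2_image_left, Set.image2_image_right]
  simp only [monomial_mul, one_mul]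

variable (S : Set σ)

theorem span_X_image_eq_span_monomial :
    Ideal.span (X '' S : Set (MvPolynomial σ R)) =
      Ideal.span ((monomial · 1) '' {d | 1 ≤ Finsupp.weight (S.indicator 1) d}) := by
  ext f
  rw [mem_ideal_span_X_image,
    mem_ideal_span_monomial_image_of_isUpperSet (Finsupp.isUpperSet_le_weight _ 1)]
  exact forall₂_congr fun d _ => Finsupp.one_le_weight_indicator_iff.symm

theorem span_X_image_pow (k : ℕ) :
    Ideal.span (X '' S : Set (MvPolynomial σ R)) ^ k =
      Ideal.span ((monomial · 1) '' {d | k ≤ Finsupp.weight (S.indicator 1) d}) := by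
  induction k with
  | zero =>
    rw [pow_zero, Ideal.one_eq_top, eq_comm, Ideal.eq_top_iff_one]
    exact Ideal.subset_span ⟨0, Nat.zero_le _, rfl⟩
  | succ k ih =>
    rw [pow_succ, ih, span_X_image_eq_span_monomial, span_monomial_image_mul,
      Finsupp.le_weight_indicator_add_one_le]

variable {S}

theorem mem_span_X_image_pow_iff {k : ℕ} {f : MvPolynomial σ R} :
    f ∈ Ideal.span (X '' S) ^ k ↔ ∀ d ∈ f.support, k ≤ Finsupp.weight (S.indicator 1) d := by
  rw [span_X_image_pow,
    mem_ideal_span_monomial_image_of_isUpperSet (Finsupp.isUpperSet_le_weight _ k)]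
  rfl

theorem mem_span_X_image_pow_iff_le_weightedOrder {k : ℕ} {f : MvPolynomial σ R} :
    f ∈ Ideal.span (X '' S) ^ k ↔
      (k : ℕ∞) ≤ (f : MvPowerSeries σ R).weightedOrder (S.indicator 1) := by
  rw [mem_span_X_image_pow_iff]
  constructor
  · refine fun h => MvPowerSeries.nat_le_weightedOrder _ fun d hd => ?_
    rw [coeff_coe, ← notMem_support_iff]
    exact fun hmem => (h d hmem).not_gt hd
  · intro h d hd
    rw [mem_support_iff, ← coeff_coe] at hd
    exact_mod_cast h.trans (MvPowerSeries.weightedOrder_le _ hd)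

theorem mem_span_X_image_iff_one_le_weightedOrder {f : MvPolynomial σ R} :
    f ∈ Ideal.span (X '' S) ↔ 1 ≤ (f : MvPowerSeries σ R).weightedOrder (S.indicator 1) := by
  simpa using mem_span_X_image_pow_iff_le_weightedOrder (S := S) (k := 1) (f := f)

theorem X_mem_span_X_image_iff [Nontrivial R] {i : σ} :
    (X i : MvPolynomial σ R) ∈ Ideal.span (X '' S) ↔ i ∈ S := by
  simp [mem_ideal_span_X_image, support_X, Finsupp.single_apply_eq_zero]

theorem span_X_image_le_span_X_image_iff [Nontrivial R] {T : Set σ} :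
    Ideal.span (X '' S : Set (MvPolynomial σ R)) ≤ Ideal.span (X '' T) ↔ S ⊆ T :=
  ⟨fun h _ hi => X_mem_span_X_image_iff.1 (h (X_mem_span_X_image_iff.2 hi)),
    fun h => Ideal.span_mono (Set.image_mono h)⟩

variable [IsDomain R]

theorem isPrime_span_X_image : (Ideal.span (X '' S : Set (MvPolynomial σ R))).IsPrime := by
  refine Ideal.isPrime_iff.2 ⟨?_, fun {f g} hfg => ?_⟩
  · rw [Ne, Ideal.eq_top_iff_one, mem_span_X_image_iff_one_le_weightedOrder, coe_one,
      MvPowerSeries.weightedOrder_one]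
    simp
  · simp only [mem_span_X_image_iff_one_le_weightedOrder, coe_mul,
      MvPowerSeries.weightedOrder_mul, Order.one_le_iff_ne_zero, ← not_and_or] at hfg ⊢
    exact fun h => hfg (by rw [h.1, h.2, add_zero])

theorem isPrimary_span_X_image_pow {k : ℕ} (hk : k ≠ 0) :
    (Ideal.span (X '' S : Set (MvPolynomial σ R)) ^ k).IsPrimary := by
  refine Ideal.isPrimary_iff.2 ⟨ne_top_of_le_ne_top isPrime_span_X_image.ne_top
    (Ideal.pow_le_self hk), fun {f g} hfg => or_iff_not_imp_right.2 fun hg => ?_⟩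
  rw [Ideal.radical_pow _ hk, isPrime_span_X_image.radical,
    mem_span_X_image_iff_one_le_weightedOrder, not_le, Order.lt_one_iff] at hg
  rw [mem_span_X_image_pow_iff_le_weightedOrder, coe_mul, MvPowerSeries.weightedOrder_mul,
    hg, add_zero] at hfg
  exact mem_span_X_image_pow_iff_le_weightedOrder.2 hfg

end MvPolynomial

section AssociatedPrimes

variable {R : Type*} [CommRing R]

theorem Ideal.colon_bot_quotient_mk (I : Ideal R) (f : R) :
    (⊥ : Submodule R (R ⧸ I)).colon {Ideal.Quotient.mk I f} = I.colon {f} := by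
  ext r
  rw [Submodule.mem_colon_singleton, Submodule.mem_colon_singleton, Submodule.mem_bot,
    Algebra.smul_def, Ideal.Quotient.algebraMap_eq, ← map_mul, Ideal.Quotient.eq_zero_iff_mem,
    smul_eq_mul]

theorem isAssociatedPrime_quotient_iff {I P : Ideal R} :
    IsAssociatedPrime P (R ⧸ I) ↔ P.IsPrime ∧ ∃ f : R, P = (I.colon {f}).radical := by
  rw [IsAssociatedPrime, Submodule.isAssociatedPrime_def, Ideal.Quotient.mk_surjective.exists]
  simp only [Ideal.colon_bot_quotient_mk]

theorem IsAssociatedPrime.exists_eq_radical_of_isPrimary {ι : Type*} {s : Finset ι}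
    {q : ι → Ideal R} (hq : ∀ i ∈ s, (q i).IsPrimary) {P : Ideal R}
    (hP : IsAssociatedPrime P (R ⧸ s.inf q)) : ∃ i ∈ s, P = (q i).radical := by
  classical
  obtain ⟨hPprime, f, rfl⟩ := isAssociatedPrime_quotient_iff.1 hP
  rw [Submodule.colon_finsetInf] at hPprime ⊢
  obtain ⟨i, hi, hle⟩ := (hPprime.inf_le').1 (Ideal.le_radical (I := s.inf _))
  have hrad := (hq i hi).radical_colon_singleton_eq_ite f
  rw [Submodule.colon_univ] at hrad
  have hfi : f ∉ q i := fun hf => hPprime.ne_top (top_le_iff.1 (by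
    simpa [hrad, hf] using (hPprime.radical_le_iff.2 hle)))
  rw [if_neg hfi] at hrad
  refine ⟨i, hi, le_antisymm ?_ ?_⟩
  · exact hrad ▸ Ideal.radical_mono (Finset.inf_le hi)
  · exact hrad ▸ hPprime.radical_le_iff.2 hle

end AssociatedPrimes

open scoped Pointwise

section Hypergraph

variable {σ K : Type*} [Field K] {E : Finset (Finset σ)}

def coverExponents (E : Finset (Finset σ)) : Set (σ →₀ ℕ) :=
  {d | ∀ e ∈ E, ∃ i ∈ e, d i ≠ 0}

theorem isUpperSet_coverExponents : IsUpperSet (coverExponents E) := by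
  intro a b hab ha e he
  obtain ⟨i, hi, hai⟩ := ha e he
  exact ⟨i, hi, fun h => hai (Nat.eq_zero_of_le_zero (h ▸ hab i))⟩

theorem dualIdeal_eq_span_monomial :
    dualIdeal K E = Ideal.span ((monomial · 1) '' coverExponents E) := by
  ext f
  rw [mem_ideal_span_monomial_image_of_isUpperSet isUpperSet_coverExponents]
  simp only [dualIdeal, Submodule.mem_iInf, mem_ideal_span_X_image, Finset.mem_coe]
  exact forall₂_comm

theorem dualIdeal_eq_inf : dualIdeal K E = E.inf fun e => Ideal.span (X '' ↑e) := by
  rw [Finset.inf_eq_iInf]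
  rfl

theorem dualIdeal_sq_eq_span_monomial :
    dualIdeal K E ^ 2 = Ideal.span ((monomial · 1) '' (coverExponents E + coverExponents E)) := by
  rw [sq, dualIdeal_eq_span_monomial, span_monomial_image_mul]

theorem mem_dualIdeal_sq_iff {f : MvPolynomial σ K} :
    f ∈ dualIdeal K E ^ 2 ↔
      ∀ d ∈ f.support, ∃ b ∈ coverExponents E, ∃ b' ∈ coverExponents E, b + b' ≤ d := by
  rw [dualIdeal_sq_eq_span_monomial, mem_ideal_span_monomial_image]
  simp only [Set.mem_add, exists_exists_and_exists_and_eq_and]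

theorem dualIdeal_sq_le {e : Finset σ} (he : e ∈ E) : dualIdeal K E ^ 2 ≤ Ideal.span (X '' ↑e) :=
  (Ideal.pow_le_self two_ne_zero).trans (iInf₂_le e he)

theorem exists_span_X_image_le_of_dualIdeal_sq_le {Q : Ideal (MvPolynomial σ K)}
    (hQ : Q.IsPrime) (hJQ : dualIdeal K E ^ 2 ≤ Q) : ∃ e ∈ E, Ideal.span (X '' ↑e) ≤ Q := by
  rw [Ideal.IsPrime.pow_le_iff (hP := hQ) two_ne_zero, dualIdeal_eq_inf] at hJQ
  exact hQ.inf_le'.1 hJQ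

theorem span_X_image_mem_minimalPrimes_iff (hE : IsAntichain (· ⊆ ·) (E : Set (Finset σ)))
    {S : Finset σ} :
    Ideal.span (X '' ↑S) ∈ (dualIdeal K E ^ 2).minimalPrimes ↔ S ∈ E := by
  constructor
  · intro hS
    obtain ⟨e, he, heS⟩ := exists_span_X_image_le_of_dualIdeal_sq_le hS.1.1 hS.1.2
    have hSe := hS.2 ⟨isPrime_span_X_image, dualIdeal_sq_le he⟩ heS
    rw [span_X_image_le_span_X_image_iff, Finset.coe_subset] at heS hSe
    exact subset_antisymm hSe heS ▸ he
  · intro hS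
    refine ⟨⟨isPrime_span_X_image, dualIdeal_sq_le hS⟩, fun Q ⟨hQ, hJQ⟩ hQS => ?_⟩
    obtain ⟨e, he, heQ⟩ := exists_span_X_image_le_of_dualIdeal_sq_le hQ hJQ
    have heS := span_X_image_le_span_X_image_iff.1 (heQ.trans hQS)
    exact (hE.eq he hS (Finset.coe_subset.1 heS)) ▸ heQ

def IsBipartite (E : Finset (Finset σ)) : Prop :=
  ∃ A : Finset σ, ∀ e ∈ E, (∃ x ∈ e, x ∈ A) ∧ ∃ x ∈ e, x ∉ A

theorem isBipartite_iff_exists_partition [Fintype σ] [DecidableEq σ] :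
    IsBipartite E ↔ ∃ A B : Finset σ, Disjoint A B ∧ A ∪ B = Finset.univ ∧
      ∀ e ∈ E, (e ∩ A).Nonempty ∧ (e ∩ B).Nonempty := by
  constructor
  · rintro ⟨A, hA⟩
    refine ⟨A, Aᶜ, disjoint_compl_right, sup_compl_eq_top, fun e he => ?_⟩
    obtain ⟨⟨x, hxe, hxA⟩, ⟨y, hye, hyA⟩⟩ := hA e he
    exact ⟨⟨x, mem_inter.2 ⟨hxe, hxA⟩⟩, ⟨y, mem_inter.2 ⟨hye, mem_compl.2 hyA⟩⟩⟩
  · rintro ⟨A, B, hAB, -, hE⟩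
    refine ⟨A, fun e he => ?_⟩
    obtain ⟨⟨x, hx⟩, ⟨y, hy⟩⟩ := hE e he
    rw [Finset.mem_inter] at hx hy
    exact ⟨⟨x, hx⟩, ⟨y, hy.1, Finset.disjoint_right.1 hAB hy.2⟩⟩

theorem isBipartite_filter_subset_of_mem [DecidableEq σ] (hE : (E : Set (Finset σ)).Sized 2)
    {e : Finset σ} (he : e ∈ E) : IsBipartite (E.filter (· ⊆ e)) := by
  obtain ⟨x, y, hxy, rfl⟩ := Finset.card_eq_two.1 (hE he)
  refine ⟨{x}, fun f hf => ?_⟩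
  rw [Finset.mem_filter] at hf
  obtain rfl : f = {x, y} := Finset.eq_of_subset_of_card_le hf.2 (by rw [hE he, hE hf.1])
  exact ⟨⟨x, by simp⟩, ⟨y, by simp, by simpa using hxy.symm⟩⟩

theorem exists_add_le_of_isBipartite [Finite σ] (hE : (E : Set (Finset σ)).Sized 2)
    (hbip : IsBipartite E) {d : σ →₀ ℕ}
    (hd : ∀ e ∈ E, 2 ≤ Finsupp.weight ((e : Set σ).indicator 1) d) :
    ∃ b ∈ coverExponents E, ∃ b' ∈ coverExponents E, b + b' ≤ d := by
  classical
  obtain ⟨A, hA⟩ := hbip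
  set b : σ →₀ ℕ :=
    Finsupp.equivFunOnFinite.symm fun i => if i ∈ A then min (d i) 1 else d i - 1 with hb
  have hbd : b ≤ d := fun i => by
    simp only [hb, Finsupp.coe_equivFunOnFinite_symm]
    split <;> omega
  refine ⟨b, fun e he => ?_, d - b, fun e he => ?_, (add_tsub_cancel_of_le hbd).le⟩
  all_goals
    obtain ⟨⟨x, hxe, hxA⟩, ⟨y, hye, hyA⟩⟩ := hA e he
    have hxy : x ≠ y := fun h => hyA (h ▸ hxA)
    obtain rfl : e = {x, y} := (Finset.eq_of_subset_of_card_le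
      (Finset.insert_subset hxe (Finset.singleton_subset_iff.2 hye))
      (by rw [hE he, Finset.card_pair hxy])).symm
    have h2 := hd _ he
    rw [Finsupp.weight_indicator_eq_sum, Finset.sum_pair hxy] at h2
    simp only [Finset.mem_insert, Finset.mem_singleton, exists_eq_or_imp, exists_eq_left,
      Finsupp.tsub_apply, hb, Finsupp.coe_equivFunOnFinite_symm, if_pos hxA, if_neg hyA]
    omega

theorem dualIdeal_sq_eq_inf_of_isBipartite [Finite σ] (hE : (E : Set (Finset σ)).Sized 2)
    (hbip : IsBipartite E) :
    dualIdeal K E ^ 2 = E.inf fun e => Ideal.span (X '' ↑e) ^ 2 := by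
  refine le_antisymm (Finset.le_inf fun e he => Ideal.pow_right_mono (iInf₂_le e he) 2)
    fun f hf => mem_dualIdeal_sq_iff.2 fun d hd => exists_add_le_of_isBipartite hE hbip
      fun e he => mem_span_X_image_pow_iff.1 (Submodule.mem_finsetInf.1 hf e he) d hd

theorem mem_minimalPrimes_of_isAssociatedPrime [Finite σ] (hE : (E : Set (Finset σ)).Sized 2)
    (hbip : IsBipartite E) {P : Ideal (MvPolynomial σ K)}
    (hP : IsAssociatedPrime P (MvPolynomial σ K ⧸ dualIdeal K E ^ 2)) :
    P ∈ (dualIdeal K E ^ 2).minimalPrimes := by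
  rw [dualIdeal_sq_eq_inf_of_isBipartite hE hbip] at hP
  obtain ⟨e, he, rfl⟩ :=
    hP.exists_eq_radical_of_isPrimary fun e _ => isPrimary_span_X_image_pow two_ne_zero
  rw [Ideal.radical_pow _ two_ne_zero, isPrime_span_X_image.radical]
  exact (span_X_image_mem_minimalPrimes_iff hE.isAntichain).2 he

theorem isBipartite_filter_of_add_le_one [DecidableEq σ] {C : Finset σ} {b b' : σ →₀ ℕ}
    (hb : b ∈ coverExponents E) (hb' : b' ∈ coverExponents E) (hC : ∀ x ∈ C, b x + b' x ≤ 1) :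
    IsBipartite (E.filter (· ⊆ C)) := by
  refine ⟨b.support, fun e he => ?_⟩
  rw [Finset.mem_filter] at he
  obtain ⟨x, hxe, hx⟩ := hb e he.1
  obtain ⟨y, hye, hy⟩ := hb' e he.1
  have := hC y (he.2 hye)
  exact ⟨⟨x, hxe, Finsupp.mem_support_iff.2 hx⟩,
    ⟨y, hye, by rw [Finsupp.notMem_support_iff]; omega⟩⟩

def colonWitness [Finite σ] [DecidableEq σ] (C : Finset σ) : σ →₀ ℕ :=
  Finsupp.equivFunOnFinite.symm fun x => if x ∈ C then 1 else 2

theorem single_add_colonWitness_mem [Finite σ] [DecidableEq σ] {C : Finset σ} {i : σ}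
    (hi : i ∈ C) (hbip : IsBipartite (E.filter (· ⊆ C.erase i))) :
    Finsupp.single i 1 + colonWitness C ∈ coverExponents E + coverExponents E := by
  obtain ⟨A, hA⟩ := hbip
  let u : σ →₀ ℕ :=
    Finsupp.equivFunOnFinite.symm fun x => if x ∈ C.erase i ∧ x ∉ A then 0 else 1
  let v : σ →₀ ℕ :=
    Finsupp.equivFunOnFinite.symm fun x => if x ∈ C.erase i ∧ x ∈ A then 0 else 1
  have hcover : ∀ e ∈ E, (∃ x ∈ e, u x ≠ 0) ∧ ∃ x ∈ e, v x ≠ 0 := by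
    intro e he
    by_cases heC : e ⊆ C.erase i
    · obtain ⟨⟨x, hxe, hxA⟩, ⟨y, hye, hyA⟩⟩ := hA e (Finset.mem_filter.2 ⟨he, heC⟩)
      exact ⟨⟨x, hxe, by simp [u, hxA]⟩, ⟨y, hye, by simp [v, hyA]⟩⟩
    · obtain ⟨x, hxe, hxC⟩ := Finset.not_subset.1 heC
      exact ⟨⟨x, hxe, by simp [u, -mem_erase, hxC]⟩, ⟨x, hxe, by simp [v, -mem_erase, hxC]⟩⟩
  refine ⟨u, fun e he => (hcover e he).1, v, fun e he => (hcover e he).2, ?_⟩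
  ext x
  simp only [u, v, colonWitness, Finsupp.add_apply, Finsupp.coe_equivFunOnFinite_symm,
    Finsupp.single_apply, Finset.mem_erase]
  by_cases hxi : x = i
  · subst hxi; simp [hi]
  · by_cases hxC : x ∈ C <;> by_cases hxA : x ∈ A <;> simp [hxi, hxC, hxA, Ne.symm hxi]

theorem colon_colonWitness [Finite σ] [DecidableEq σ] {C : Finset σ}
    (hC : ¬ IsBipartite (E.filter (· ⊆ C)))
    (hmin : ∀ i ∈ C, IsBipartite (E.filter (· ⊆ C.erase i))) :
    (dualIdeal K E ^ 2).colon {monomial (colonWitness C) 1} = Ideal.span (X '' ↑C) := by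
  refine le_antisymm (fun r hr => ?_) (Ideal.span_le.2 ?_)
  · rw [Submodule.mem_colon_singleton, smul_eq_mul, mem_dualIdeal_sq_iff] at hr
    rw [mem_ideal_span_X_image]
    intro d hd
    by_contra! hdC
    have hsupp : d + colonWitness C ∈ (r * monomial (colonWitness C) 1).support := by
      rwa [mem_support_iff, coeff_mul_monomial, mul_one, ← mem_support_iff]
    obtain ⟨b, hb, b', hb', hle⟩ := hr _ hsupp
    refine hC (isBipartite_filter_of_add_le_one hb hb' fun x hx => ?_)
    simpa [colonWitness, hx, hdC x hx] using hle x
  · rintro _ ⟨i, hi, rfl⟩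
    obtain ⟨b, hb, b', hb', hsum⟩ := single_add_colonWitness_mem hi (hmin i hi)
    rw [SetLike.mem_coe, Submodule.mem_colon_singleton, smul_eq_mul, X, monomial_mul, one_mul,
      ← hsum, dualIdeal_sq_eq_span_monomial]
    exact Ideal.subset_span ⟨_, Set.add_mem_add hb hb', rfl⟩

theorem exists_isAssociatedPrime_notMem_minimalPrimes [Fintype σ] [DecidableEq σ]
    (hE : (E : Set (Finset σ)).Sized 2) (hbip : ¬ IsBipartite E) :
    ∃ P : Ideal (MvPolynomial σ K),
      IsAssociatedPrime P (MvPolynomial σ K ⧸ dualIdeal K E ^ 2) ∧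
        P ∉ (dualIdeal K E ^ 2).minimalPrimes := by
  obtain ⟨C, hC⟩ := exists_minimal_of_wellFoundedLT
    (fun S : Finset σ => ¬ IsBipartite (E.filter (· ⊆ S))) ⟨univ, by simpa using hbip⟩
  have hmin : ∀ i ∈ C, IsBipartite (E.filter (· ⊆ C.erase i)) :=
    fun i hi => not_not.1 (hC.not_prop_of_lt (Finset.erase_ssubset hi))
  refine ⟨Ideal.span (X '' ↑C), isAssociatedPrime_quotient_iff.2 ⟨isPrime_span_X_image,
    monomial (colonWitness C) 1, ?_⟩, fun hCmin => ?_⟩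
  · rw [colon_colonWitness hC.prop hmin, isPrime_span_X_image.radical]
  · rw [span_X_image_mem_minimalPrimes_iff hE.isAntichain] at hCmin
    exact hC.prop (isBipartite_filter_subset_of_mem hE hCmin)

end Hypergraph

theorem stmt8_general {K : Type*} [Field K] {n : ℕ} (E : Finset (Finset (Fin n)))
    (hm : ∀ e ∈ E, e.card = 2) :
    (∀ P : Ideal (MvPolynomial (Fin n) K),
        IsAssociatedPrime P (MvPolynomial (Fin n) K ⧸ ((dualIdeal K E) ^ 2)) →
          P ∈ ((dualIdeal K E) ^ 2).minimalPrimes) ↔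
      (∃ A B : Finset (Fin n), Disjoint A B ∧ A ∪ B = Finset.univ ∧
        ∀ e ∈ E, (e ∩ A).Nonempty ∧ (e ∩ B).Nonempty) := by
  have hE : (E : Set (Finset (Fin n))).Sized 2 := hm
  rw [← isBipartite_iff_exists_partition]
  refine ⟨fun h => ?_, fun hbip P hP => mem_minimalPrimes_of_isAssociatedPrime hE hbip hP⟩
  by_contra hbip
  obtain ⟨P, hP, hPmin⟩ := exists_isAssociatedPrime_notMem_minimalPrimes (K := K) hE hbip
  exact hPmin (h P hP)

theorem stmt8 {K : Type*} [Field K] {n : ℕ} (E : Finset (Finset (Fin n)))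
    (hE : E.Nonempty) (hm : ∀ e ∈ E, e.card = 2) :
    (∀ P : Ideal (MvPolynomial (Fin n) K),
        IsAssociatedPrime P (MvPolynomial (Fin n) K ⧸ ((dualIdeal K E) ^ 2)) →
          P ∈ ((dualIdeal K E) ^ 2).minimalPrimes) ↔
      (∃ A B : Finset (Fin n), Disjoint A B ∧ A ∪ B = Finset.univ ∧
        ∀ e ∈ E, (e ∩ A).Nonempty ∧ (e ∩ B).Nonempty) :=
  stmt8_general E hm
end
end

section
/- Let n = 4t+1 ≥ 5 and H the 3-hypergraph on {x_1,...,x_n} with edges {x_1,x_2,x_3}, {x_3,x_4,x_5}, ..., {x_{n-2},x_{n-1},x_n}, {x_n,x_1,x_2}. Then the tuple A with a_i = 1 for i odd and a_i = 0 for i even is a 2-cover of H that is not the sum of two 1-covers of H. -/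
open MvPolynomial Finset

noncomputable section

/-!
In 0-based indexing, `altCover` is `1` on the even vertices and `0` on the odd ones, and the
edges `{2j, 2j+1, 2j+2}` link the even vertices `0, 2, …, n - 1` into a cycle of length
`(n + 1) / 2`. If `altCover = b + c` with `b`, `c` 1-covers, then `b` and `c` vanish on odd
vertices and are complementary 0/1-functions on even ones, so each edge forces `b` to take the
values `0` and `1` on its two even vertices: `b` properly 2-colours that cycle. For `n = 4t + 1`
the cycle has odd length `2t + 1`.
-/

theorem Finset.sum_triple {V M : Type*} [DecidableEq V] [AddCommMonoid M] (f : V → M)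
    {x y z : V} (hxy : x ≠ y) (hxz : x ≠ z) (hyz : y ≠ z) :
    ∑ i ∈ {x, y, z}, f i = f x + f y + f z := by
  rw [sum_insert (by simp [hxy, hxz]), sum_pair hyz, add_assoc]

theorem false_of_alternating_odd_cycle {g : ℕ → ℕ} {m : ℕ} (hm : Even m)
    (hstep : ∀ j < m, g j + g (j + 1) = 1) (hclose : g m + g 0 = 1) : False := by
  obtain ⟨k, rfl⟩ := hm
  have hperiod : ∀ i ≤ k, g (2 * i) = g 0 := by
    intro i hi
    induction i with
    | zero => rfl
    | succ i ih =>
      have h₁ := hstep (2 * i) (by omega)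
      have h₂ := hstep (2 * i + 1) (by omega)
      rw [← ih (by omega), show 2 * (i + 1) = 2 * i + 1 + 1 by ring]
      omega
  have hk := hperiod k le_rfl
  rw [← two_mul] at hclose
  omega

section Cyc3

open Fin.NatCast

variable {m : ℕ}

theorem cyc3_eq_image (h : 0 < 2 * m + 1) :
    cyc3 (2 * m + 1) h = (range (m + 1)).image fun j =>
      ({((2 * j : ℕ) : Fin (2 * m + 1)), ((2 * j + 1 : ℕ) : Fin (2 * m + 1)),
        ((2 * j + 2 : ℕ) : Fin (2 * m + 1))} : Finset (Fin (2 * m + 1))) := by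
  rw [cyc3, show (2 * m + 1 + 1) / 2 = m + 1 by omega]
  rfl

theorem forall_cyc3_le_sum_iff (hm : 0 < m) (f : Fin (2 * m + 1) → ℕ) (k : ℕ) :
    (∀ e ∈ cyc3 (2 * m + 1) (by omega), k ≤ ∑ i ∈ e, f i) ↔
      (∀ j < m, k ≤ f ↑(2 * j) + f ↑(2 * j + 1) + f ↑(2 * j + 2)) ∧
        k ≤ f ↑(2 * m) + f 0 + f 1 := by
  have hne {a b : ℕ} (h : a ≠ b ∧ a < 2 * m + 1 ∧ b < 2 * m + 1) :
      (a : Fin (2 * m + 1)) ≠ b := by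
    rw [ne_eq, Fin.ext_iff, Fin.val_cast_of_lt h.2.1, Fin.val_cast_of_lt h.2.2]
    exact h.1
  have hwrap₀ : ((2 * m + 1 : ℕ) : Fin (2 * m + 1)) = 0 := Fin.natCast_self _
  have hwrap₁ : ((2 * m + 2 : ℕ) : Fin (2 * m + 1)) = 1 := by
    ext
    rw [Fin.val_natCast, Fin.val_one', show 2 * m + 2 = 2 * m + 1 + 1 by ring, Nat.add_mod_left]
  rw [cyc3_eq_image, forall_mem_image, range_add_one, forall_mem_insert, and_comm]
  simp only [mem_range]
  refine and_congr (forall₂_congr fun j hj => ?_) ?_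
  · rw [sum_triple f (hne (by omega)) (hne (by omega)) (hne (by omega))]
  · rw [hwrap₀, hwrap₁, sum_triple f (y := 0) (z := 1) (hne (b := 0) (by omega))
      (hne (b := 1) (by omega)) (hne (a := 0) (b := 1) (by omega))]

theorem altCover_natCast {a : ℕ} (ha : a < 2 * m + 1) :
    altCover (2 * m + 1) a = if a % 2 = 0 then 1 else 0 := by
  rw [altCover, Fin.val_cast_of_lt ha]

theorem altCover_zero : altCover (2 * m + 1) 0 = 1 := by
  simp [altCover]

theorem altCover_one (hm : 0 < m) : altCover (2 * m + 1) 1 = 0 := by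
  simp [altCover, Nat.mod_eq_of_lt (show 1 < 2 * m + 1 by omega)]

theorem isCover_altCover (hm : 0 < m) :
    IsCover (cyc3 (2 * m + 1) (by omega)) 2 (altCover (2 * m + 1)) :=
  ⟨fun h => by simpa [altCover_zero] using congrFun h 0, by
    rw [forall_cyc3_le_sum_iff hm]
    refine ⟨fun j hj => ?_, ?_⟩
    · rw [altCover_natCast (by omega), altCover_natCast (by omega), altCover_natCast (by omega)]
      split_ifs <;> omega
    · rw [altCover_natCast (by omega), altCover_zero, altCover_one hm]
      split_ifs <;> omega⟩

theorem not_sumTwoOneCovers_altCover (hm : 0 < m) (hm_even : Even m) :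
    ¬ SumTwoOneCovers (cyc3 (2 * m + 1) (by omega)) (altCover (2 * m + 1)) := by
  rintro ⟨b, c, ⟨-, hb⟩, ⟨-, hc⟩, hsplit⟩
  have hsum (v : Fin (2 * m + 1)) : b v + c v = altCover (2 * m + 1) v := by
    rw [hsplit, Pi.add_apply]
  have hsum_even {a : ℕ} (ha : a < 2 * m + 1) (h : a % 2 = 0) : b a + c a = 1 := by
    rw [hsum, altCover_natCast ha, if_pos h]
  have hsum_odd {a : ℕ} (ha : a < 2 * m + 1) (h : a % 2 = 1) : b a + c a = 0 := by
    rw [hsum, altCover_natCast ha, if_neg (by omega)]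
  rw [forall_cyc3_le_sum_iff hm] at hb hc
  refine false_of_alternating_odd_cycle (g := fun j => b ↑(2 * j)) hm_even (fun j hj => ?_) ?_
  · have hb_edge := hb.1 j hj
    have hc_edge := hc.1 j hj
    have h₀ := hsum_even (a := 2 * j) (by omega) (by omega)
    have h₁ := hsum_odd (a := 2 * j + 1) (by omega) (by omega)
    have h₂ := hsum_even (a := 2 * j + 2) (by omega) (by omega)
    show b ↑(2 * j) + b ↑(2 * j + 2) = 1
    omega
  · have hb_edge := hb.2
    have hc_edge := hc.2
    have h₀ := hsum_even (a := 2 * m) (by omega) (by omega)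
    have h₁ : b 0 + c 0 = 1 := by rw [hsum, altCover_zero]
    have h₂ : b 1 + c 1 = 0 := by rw [hsum, altCover_one hm]
    show b ↑(2 * m) + b 0 = 1
    omega

end Cyc3

theorem stmt10 {n t : ℕ} (ht : 1 ≤ t) (hn : n = 4 * t + 1) :
    IsCover (cyc3 n (by omega)) 2 (altCover n) ∧
      ¬ SumTwoOneCovers (cyc3 n (by omega)) (altCover n) := by
  obtain rfl : n = 2 * (2 * t) + 1 := by omega
  exact ⟨isCover_altCover (by omega), not_sumTwoOneCovers_altCover (by omega) (even_two_mul t)⟩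
end
end
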